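/- In any ontological model for ℂ² with D injective, for every unit vector ψ ∈ ℂ² and every measurable set B ⊆ Λ: ρ_ψ(B) = ρ₁(B ∩ Λ_ψ), where ρ_ψ := D⁻¹(P_ψ), ρ₁ := 2·D⁻¹(½I), and Λ_ψ := {λ ∈ Λ : p_{P_ψ}(λ) = 1}. -/

import Mathlib

open MeasureTheory
open scoped NNReal ENNReal ComplexOrder

noncomputable section

/-- The rank-one projection `|ψ⟩⟨ψ|` associated with a vector `ψ ∈ ℂⁿ`. -/
def proj {n : ℕ} (ψ : EuclideanSpace ℂ (Fin n)) : Matrix (Fin n) (Fin n) ℂ :=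
  Matrix.of fun i j => ψ i * (starRingEnd ℂ) (ψ j)

/-- An ontological model for `ℂⁿ`: a measurable space `Λ` of ontic states, a convex set `C`
of preparable probability measures on `Λ`, measurable response functions `p A : Λ → [0,1]`
for each effect `A` (`0 ≤ A ≤ 1` in the Loewner order), and a map `D` from `C` onto the set
of density matrices reproducing the quantum statistics. -/
structure OntModel (n : ℕ) (Λ : Type*) [MeasurableSpace Λ] where
  C : Set (Measure Λ)
  prob : ∀ ρ ∈ C, IsProbabilityMeasure ρ
  convexC : ∀ ρa ∈ C, ∀ ρb ∈ C, ∀ s : ℝ≥0, s ≤ 1 → s • ρa + (1 - s) • ρb ∈ C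
  p : Matrix (Fin n) (Fin n) ℂ → Λ → ℝ
  p_meas : ∀ A, Measurable (p A)
  p_nonneg : ∀ A l, 0 ≤ p A l
  p_le_one : ∀ A l, p A l ≤ 1
  D : Measure Λ → Matrix (Fin n) (Fin n) ℂ
  D_psd : ∀ ρ ∈ C, (D ρ).PosSemidef
  D_trace : ∀ ρ ∈ C, (D ρ).trace = 1
  D_surj : ∀ W : Matrix (Fin n) (Fin n) ℂ, W.PosSemidef → W.trace = 1 → ∃ ρ ∈ C, D ρ = W
  agree : ∀ ρ ∈ C, ∀ A : Matrix (Fin n) (Fin n) ℂ, A.PosSemidef → (1 - A).PosSemidef →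
    ((∫ l, p A l ∂ρ : ℝ) : ℂ) = (D ρ * A).trace

/-!
Let `P = P_ψ`. Effects (already the rank-one projections) separate density matrices, so `D` is
affine on mixtures; hence for any `ρ_φ ∈ D⁻¹(I - P)` the mixture `½ ρ_ψ + ½ ρ_φ` has density
matrix `½ I` and, by injectivity, equals `D⁻¹(½ I)`. The response `p_P` integrates to
`tr(P P) = 1` against `ρ_ψ` and to `tr((I - P) P) = 0` against `ρ_φ`, so `ρ_ψ` is carried by `Λ_ψ`
while `ρ_φ` does not charge it.
-/

open scoped MatrixOrder InnerProductSpace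
open Matrix

lemma proj_eq_vecMulVec {n : ℕ} (ψ : EuclideanSpace ℂ (Fin n)) :
    proj ψ = vecMulVec ψ (star ⇑ψ) := rfl

lemma EuclideanSpace.star_dotProduct_self {n : ℕ} (ψ : EuclideanSpace ℂ (Fin n)) :
    star ⇑ψ ⬝ᵥ ⇑ψ = ((‖ψ‖ ^ 2 : ℝ) : ℂ) := by
  rw [dotProduct_comm, ← EuclideanSpace.inner_eq_star_dotProduct, inner_self_eq_norm_sq_to_K]
  norm_cast

lemma proj_mul_proj {n : ℕ} (ψ : EuclideanSpace ℂ (Fin n)) :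
    proj ψ * proj ψ = ((‖ψ‖ ^ 2 : ℝ) : ℂ) • proj ψ := by
  rw [proj_eq_vecMulVec, vecMulVec_mul_vecMulVec, EuclideanSpace.star_dotProduct_self,
    vecMulVec_smul]

lemma trace_proj {n : ℕ} (ψ : EuclideanSpace ℂ (Fin n)) :
    (proj ψ).trace = ((‖ψ‖ ^ 2 : ℝ) : ℂ) := by
  rw [proj_eq_vecMulVec, trace_vecMulVec, dotProduct_comm, EuclideanSpace.star_dotProduct_self]

lemma trace_mul_proj {n : ℕ} (W : Matrix (Fin n) (Fin n) ℂ) (ψ : EuclideanSpace ℂ (Fin n)) :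
    (W * proj ψ).trace = ⟪ψ, toEuclideanLin W ψ⟫_ℂ := by
  rw [proj_eq_vecMulVec, mul_vecMulVec, trace_vecMulVec]
  rfl

lemma isStarProjection_proj {n : ℕ} {ψ : EuclideanSpace ℂ (Fin n)} (hψ : ‖ψ‖ = 1) :
    IsStarProjection (proj ψ) where
  isIdempotentElem := by rw [IsIdempotentElem, proj_mul_proj, hψ]; simp
  isSelfAdjoint := by simp [IsSelfAdjoint, proj_eq_vecMulVec, star_eq_conjTranspose]

lemma IsStarProjection.posSemidef {ι : Type*} [Fintype ι] {P : Matrix ι ι ℂ}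
    (hP : IsStarProjection P) : P.PosSemidef :=
  hP.nonneg.posSemidef

lemma LinearMap.ext_inner_map_of_norm_eq_one {V : Type*} [NormedAddCommGroup V]
    [InnerProductSpace ℂ V] (S T : V →ₗ[ℂ] V)
    (h : ∀ x : V, ‖x‖ = 1 → ⟪x, S x⟫_ℂ = ⟪x, T x⟫_ℂ) : S = T := by
  rw [← ext_inner_map]
  intro x
  rcases eq_or_ne x 0 with rfl | hx
  · simp
  have hu := h _ (norm_smul_inv_norm (𝕜 := ℂ) hx)
  simp only [map_smul, inner_smul_left, inner_smul_right] at hu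
  have hx' : (‖x‖ : ℂ)⁻¹ ≠ 0 := by simpa using hx
  have hSx := mul_left_cancel₀ ((map_ne_zero _).2 hx') (mul_left_cancel₀ hx' hu)
  rw [← inner_conj_symm, hSx, inner_conj_symm]

lemma Matrix.ext_of_trace_mul_proj {n : ℕ} {W W' : Matrix (Fin n) (Fin n) ℂ}
    (h : ∀ ψ : EuclideanSpace ℂ (Fin n), ‖ψ‖ = 1 → (W * proj ψ).trace = (W' * proj ψ).trace) :
    W = W' :=
  toEuclideanLin.injective <| LinearMap.ext_inner_map_of_norm_eq_one _ _ fun ψ hψ => by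
    simpa only [trace_mul_proj] using h ψ hψ

namespace OntModel

variable {n : ℕ} {Λ : Type*} [MeasurableSpace Λ] (M : OntModel n Λ)

lemma integrable_p (A : Matrix (Fin n) (Fin n) ℂ) (ρ : Measure Λ) [IsFiniteMeasure ρ] :
    Integrable (M.p A) ρ :=
  (integrable_const 1).mono' (M.p_meas A).aestronglyMeasurable <| .of_forall fun l => by
    rw [Real.norm_eq_abs, abs_of_nonneg (M.p_nonneg A l)]
    exact M.p_le_one A l

lemma D_smul_add_one_sub_smul {ρa ρb : Measure Λ} (ha : ρa ∈ M.C) (hb : ρb ∈ M.C) {s : ℝ≥0}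
    (hs : s ≤ 1) :
    M.D (s • ρa + (1 - s) • ρb) = (s : ℂ) • M.D ρa + ((1 - s : ℝ≥0) : ℂ) • M.D ρb := by
  have := M.prob ρa ha
  have := M.prob ρb hb
  refine ext_of_trace_mul_proj fun ψ hψ => ?_
  have hP := isStarProjection_proj hψ
  have hagree {ρ} (hρ : ρ ∈ M.C) := M.agree ρ hρ (proj ψ) hP.posSemidef hP.one_sub.posSemidef
  rw [← hagree (M.convexC ρa ha ρb hb s hs), integral_add_measure, integral_smul_nnreal_measure,
    integral_smul_nnreal_measure, add_mul, trace_add, smul_mul_assoc, smul_mul_assoc, trace_smul,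
    trace_smul, ← hagree ha, ← hagree hb]
  · simp [NNReal.smul_def]
  · exact (M.integrable_p _ _).smul_measure_nnreal
  · exact (M.integrable_p _ _).smul_measure_nnreal

lemma ae_p_eq_one {ρ : Measure Λ} (hρ : ρ ∈ M.C) {A : Matrix (Fin n) (Fin n) ℂ}
    (hA : A.PosSemidef) (hA' : (1 - A).PosSemidef) (h : (M.D ρ * A).trace = 1) :
    ∀ᵐ l ∂ρ, M.p A l = 1 := by
  have := M.prob ρ hρ
  refine (integral_eq_iff_of_ae_le (M.integrable_p A ρ) (integrable_const 1)
    (.of_forall (M.p_le_one A))).1 ?_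
  simpa [← M.agree ρ hρ A hA hA', Complex.ofReal_eq_one] using h

lemma ae_p_eq_zero {ρ : Measure Λ} (hρ : ρ ∈ M.C) {A : Matrix (Fin n) (Fin n) ℂ}
    (hA : A.PosSemidef) (hA' : (1 - A).PosSemidef) (h : (M.D ρ * A).trace = 0) :
    ∀ᵐ l ∂ρ, M.p A l = 0 := by
  have := M.prob ρ hρ
  refine ((integral_eq_iff_of_ae_le (integrable_const 0) (M.integrable_p A ρ)
    (.of_forall (M.p_nonneg A))).1 ?_).mono fun l hl => hl.symm
  rw [integral_zero, eq_comm]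
  simpa [← M.agree ρ hρ A hA hA'] using h

end OntModel

theorem rho_eq_rho1_restrict_general {Λ : Type*} [MeasurableSpace Λ] (M : OntModel 2 Λ)
    (hinj : ∀ ρa ∈ M.C, ∀ ρb ∈ M.C, M.D ρa = M.D ρb → ρa = ρb)
    (ψ : EuclideanSpace ℂ (Fin 2)) (hψ : ‖ψ‖ = 1)
    (ρψ ρhalf : Measure Λ) (hρψ : ρψ ∈ M.C) (hρhalf : ρhalf ∈ M.C)
    (hDψ : M.D ρψ = proj ψ) (hDhalf : M.D ρhalf = (1 / 2 : ℂ) • 1)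
    (B : Set Λ) :
    ρψ B = ((2 : ℝ≥0) • ρhalf) (B ∩ {l | M.p (proj ψ) l = 1}) := by
  have hP := isStarProjection_proj hψ
  have htr : (1 - proj ψ).trace = 1 := by
    rw [trace_sub, trace_one, trace_proj, hψ]; norm_num
  obtain ⟨ρφ, hρφ, hDφ⟩ := M.D_surj _ hP.one_sub.posSemidef htr
  have hmix : ρhalf = (1 / 2 : ℝ≥0) • ρψ + (1 - 1 / 2 : ℝ≥0) • ρφ := by
    refine hinj _ hρhalf _ (M.convexC _ hρψ _ hρφ _ (by norm_num)) ?_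
    rw [M.D_smul_add_one_sub_smul hρψ hρφ (by norm_num), hDψ, hDφ, hDhalf]
    norm_num [NNReal.coe_sub]
    module
  have hψ1 : ∀ᵐ l ∂ρψ, M.p (proj ψ) l = 1 :=
    M.ae_p_eq_one hρψ hP.posSemidef hP.one_sub.posSemidef
      (by rw [hDψ, hP.isIdempotentElem.eq, trace_proj, hψ]; norm_num)
  have hφ0 : ∀ᵐ l ∂ρφ, M.p (proj ψ) l = 0 :=
    M.ae_p_eq_zero hρφ hP.posSemidef hP.one_sub.posSemidef
      (by rw [hDφ, sub_mul, one_mul, hP.isIdempotentElem.eq, sub_self, trace_zero])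
  have hφB : ρφ (B ∩ {l | M.p (proj ψ) l = 1}) = 0 :=
    measure_mono_null (fun l hl => by simp_all) (ae_iff.1 hφ0)
  rw [hmix]
  simp only [Measure.smul_apply, Measure.add_apply, hφB, measure_inter_conull (mem_ae_iff.1 hψ1)]
  rw [smul_zero, add_zero, smul_smul]
  norm_num

/-- In an ontological model for `ℂ²` with `D` injective, for every unit vector `ψ` and
every measurable set `B ⊆ Λ`: `ρ_ψ(B) = ρ₁(B ∩ Λ_ψ)`, where `ρ_ψ = D⁻¹(P_ψ)`,
`ρ₁ = 2 · D⁻¹(½ I)` and `Λ_ψ = {λ : p_{P_ψ}(λ) = 1}`. -/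
theorem rho_eq_rho1_restrict {Λ : Type*} [MeasurableSpace Λ] (M : OntModel 2 Λ)
    (hinj : ∀ ρa ∈ M.C, ∀ ρb ∈ M.C, M.D ρa = M.D ρb → ρa = ρb)
    (ψ : EuclideanSpace ℂ (Fin 2)) (hψ : ‖ψ‖ = 1)
    (ρψ ρhalf : Measure Λ) (hρψ : ρψ ∈ M.C) (hρhalf : ρhalf ∈ M.C)
    (hDψ : M.D ρψ = proj ψ) (hDhalf : M.D ρhalf = (1 / 2 : ℂ) • 1)
    (B : Set Λ) (hB : MeasurableSet B) :
    ρψ B = ((2 : ℝ≥0) • ρhalf) (B ∩ {l | M.p (proj ψ) l = 1}) :=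
  rho_eq_rho1_restrict_general M hinj ψ hψ ρψ ρhalf hρψ hρhalf hDψ hDhalf B
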